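/- (Esakia's Lemma for syntactically closed formulae) Let φ(q₁,…,qₙ, p, i₁,…,i_m) be a syntactically closed ML⁺-formula, positive in p. Let (W, R, 𝕎) be a descriptive frame, Q₁,…,Qₙ ∈ 𝕎, x₁,…,x_m ∈ W, and {C_i : i ∈ I} a downwards directed family of closed sets. Then φ(Q₁,…,Qₙ, ⋂_{i∈I} C_i, {x₁},…,{x_m}) = ⋂_{i∈I} φ(Q₁,…,Qₙ, C_i, {x₁},…,{x_m}), where φ is read as a set operator. -/

import Mathlib

/-- The diamond set operator: `◇A = {w : ∃v, R w v ∧ v ∈ A}`. -/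
def diaOp {W : Type} (R : W → W → Prop) (A : Set W) : Set W := {w | ∃ v, R w v ∧ v ∈ A}

/-- The box set operator: `□A = {w : ∀v, R w v → v ∈ A}`. -/
def boxOp {W : Type} (R : W → W → Prop) (A : Set W) : Set W := {w | ∀ v, R w v → v ∈ A}

/-- The inverse diamond set operator: `◇⁻¹A = {w : ∃v ∈ A, R v w} = R(A)`. -/
def idiaOp {W : Type} (R : W → W → Prop) (A : Set W) : Set W := {w | ∃ v, R v w ∧ v ∈ A}

/-- The inverse box set operator: `□⁻¹A = {w : ∀v, R v w → v ∈ A}`. -/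
def iboxOp {W : Type} (R : W → W → Prop) (A : Set W) : Set W := {w | ∀ v, R v w → v ∈ A}
/-- A general frame: a Kripke frame together with a Boolean algebra of
admissible subsets closed under the diamond operator. -/
structure GenFrame (W : Type) where
  R : W → W → Prop
  adm : Set (Set W)
  univ_mem : Set.univ ∈ adm
  compl_mem : ∀ X ∈ adm, Xᶜ ∈ adm
  inter_mem : ∀ X ∈ adm, ∀ Y ∈ adm, X ∩ Y ∈ adm
  dia_mem : ∀ X ∈ adm, diaOp R X ∈ adm

/-- The topology generated by the admissible sets as a base of clopen sets. -/
def GenFrame.top {W : Type} (F : GenFrame W) : TopologicalSpace W :=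
  TopologicalSpace.generateFrom F.adm

/-- Differentiated: distinct points are separated by admissible sets. -/
def GenFrame.differentiated {W : Type} (F : GenFrame W) : Prop :=
  ∀ x y : W, x ≠ y → ∃ X ∈ F.adm, x ∈ X ∧ y ∉ X

/-- Tight: `R x y` iff `x ∈ ◇Y` for every admissible `Y` containing `y`. -/
def GenFrame.tight {W : Type} (F : GenFrame W) : Prop :=
  ∀ x y : W, F.R x y ↔ ∀ Y ∈ F.adm, y ∈ Y → x ∈ diaOp F.R Y

/-- Compact: every family of admissible sets with the finite intersection
property has nonempty intersection. -/
def GenFrame.cpt {W : Type} (F : GenFrame W) : Prop :=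
  ∀ C : Set (Set W), C ⊆ F.adm →
    (∀ D : Set (Set W), D ⊆ C → D.Finite → (⋂₀ D).Nonempty) →
    (⋂₀ C).Nonempty

/-- A descriptive frame is a differentiated, tight and compact general frame. -/
def GenFrame.descriptive {W : Type} (F : GenFrame W) : Prop :=
  F.differentiated ∧ F.tight ∧ F.cpt
/-- Formulas of the extended modal language ML⁺, with nominals and the
inverse modalities `◇⁻¹` (`idia`) and `□⁻¹` (`ibox`). -/
inductive MFp : Type where
  | bot
  | top
  | var (p : Nat)
  | nom (k : Nat)
  | neg (φ : MFp)
  | or (φ ψ : MFp)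
  | and (φ ψ : MFp)
  | dia (φ : MFp)
  | box (φ : MFp)
  | idia (φ : MFp)
  | ibox (φ : MFp)

def MFp.imp (φ ψ : MFp) : MFp := MFp.or (MFp.neg φ) ψ

/-- Satisfaction for ML⁺: `V` interprets propositional variables,
`g` assigns a world (i.e. a singleton) to each nominal. -/
def satp {W : Type} (R : W → W → Prop) (V : Nat → Set W) (g : Nat → W) : MFp → W → Prop
  | .bot, _ => False
  | .top, _ => True
  | .var p, w => w ∈ V p
  | .nom k, w => w = g k
  | .neg φ, w => ¬ satp R V g φ w
  | .or φ ψ, w => satp R V g φ w ∨ satp R V g ψ w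
  | .and φ ψ, w => satp R V g φ w ∧ satp R V g ψ w
  | .dia φ, w => ∃ v, R w v ∧ satp R V g φ v
  | .box φ, w => ∀ v, R w v → satp R V g φ v
  | .idia φ, w => ∃ v, R v w ∧ satp R V g φ v
  | .ibox φ, w => ∀ v, R v w → satp R V g φ v
mutual
/-- Syntactically closed: all occurrences of nominals and `◇⁻¹` are positive,
and all occurrences of `□⁻¹` are negative. -/
def synClosed : MFp → Prop
  | .bot => True
  | .top => True
  | .var _ => True
  | .nom _ => True
  | .neg φ => synOpen φ
  | .or φ ψ => synClosed φ ∧ synClosed ψ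
  | .and φ ψ => synClosed φ ∧ synClosed ψ
  | .dia φ => synClosed φ
  | .box φ => synClosed φ
  | .idia φ => synClosed φ
  | .ibox _ => False

/-- Syntactically open: all occurrences of nominals and `◇⁻¹` are negative,
and all occurrences of `□⁻¹` are positive. -/
def synOpen : MFp → Prop
  | .bot => True
  | .top => True
  | .var _ => True
  | .nom _ => False
  | .neg φ => synClosed φ
  | .or φ ψ => synOpen φ ∧ synOpen ψ
  | .and φ ψ => synOpen φ ∧ synOpen ψ
  | .dia φ => synOpen φ
  | .box φ => synOpen φ
  | .idia _ => False
  | .ibox φ => synOpen φ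
end
mutual
/-- All occurrences of the propositional variable `p` are under an even
number of negations. -/
def positiveInP (p : Nat) : MFp → Prop
  | .bot => True
  | .top => True
  | .var _ => True
  | .nom _ => True
  | .neg φ => negativeInP p φ
  | .or φ ψ => positiveInP p φ ∧ positiveInP p ψ
  | .and φ ψ => positiveInP p φ ∧ positiveInP p ψ
  | .dia φ => positiveInP p φ
  | .box φ => positiveInP p φ
  | .idia φ => positiveInP p φ
  | .ibox φ => positiveInP p φ

/-- All occurrences of the propositional variable `p` are under an odd
number of negations. -/
def negativeInP (p : Nat) : MFp → Prop
  | .bot => True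
  | .top => True
  | .var q => q ≠ p
  | .nom _ => True
  | .neg φ => positiveInP p φ
  | .or φ ψ => negativeInP p φ ∧ negativeInP p ψ
  | .and φ ψ => negativeInP p φ ∧ negativeInP p ψ
  | .dia φ => negativeInP p φ
  | .box φ => negativeInP p φ
  | .idia φ => negativeInP p φ
  | .ibox φ => negativeInP p φ
end


/-!
Esakia's lemma: if `W` is compact and every `R(x)` is closed, then `◇` commutes with
intersections of downwards directed families of closed sets `Cᵢ`, because `x ∈ ⋂ ◇Cᵢ` says
that the closed sets `R(x) ∩ Cᵢ` form a directed family of nonempty sets, whose intersection is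
then nonempty by compactness. Dually, `□` commutes with unions of upwards directed families of
open sets. The theorem follows by induction on `φ`, together with the dual statement
`φ(⋂ Cᵢ) = ⋃ φ(Cᵢ)` for syntactically open formulas negative in `p` (which handles `¬`). In the
modal cases the sets `φ(Cᵢ)` are closed (resp. open), since in a descriptive frame the relation
is closed and `◇` maps open sets to open sets, and they are directed by monotonicity of `φ` in
`p`; in the `∨` (resp. `∧`) case directedness is what lets `⋂` pass through the union.
-/

open Set Function Topology TopologicalSpace

section Operators

variable {W : Type} (R : W → W → Prop)

theorem diaOp_mono : Monotone (diaOp R) :=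
  fun _ _ hAB _ ⟨v, hv, hvA⟩ => ⟨v, hv, hAB hvA⟩

theorem boxOp_mono : Monotone (boxOp R) :=
  fun _ _ hAB _ hx v hv => hAB (hx v hv)

theorem diaOp_iUnion {ι : Sort*} (A : ι → Set W) :
    diaOp R (⋃ i, A i) = ⋃ i, diaOp R (A i) := by
  ext x
  simp only [diaOp, mem_iUnion, mem_ofPred_eq]
  exact ⟨fun ⟨v, hv, i, hvA⟩ => ⟨i, v, hv, hvA⟩, fun ⟨i, v, hv, hvA⟩ => ⟨v, hv, i, hvA⟩⟩

theorem boxOp_iInter {ι : Sort*} (A : ι → Set W) :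
    boxOp R (⋂ i, A i) = ⋂ i, boxOp R (A i) := by
  ext x
  simp only [boxOp, mem_iInter, mem_ofPred_eq]
  exact ⟨fun hx i v hv => hx v hv i, fun hx v hv i => hx i v hv⟩

theorem compl_diaOp_compl (A : Set W) : (diaOp R Aᶜ)ᶜ = boxOp R A := by
  ext x
  simp [diaOp, boxOp]

end Operators

section Directed

variable {ι X Y : Type*} {C : ι → Set X} {f g : Set X → Set Y}

theorem iInter_union_subset_of_directed (hC : Directed (· ⊇ ·) C) (hf : Monotone f)
    (hg : Monotone g) : ⋂ i, (f (C i) ∪ g (C i)) ⊆ (⋂ i, f (C i)) ∪ ⋂ i, g (C i) := by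
  intro y hy
  rw [mem_iInter] at hy
  refine or_iff_not_imp_left.2 fun hf' => ?_
  obtain ⟨i, hi⟩ : ∃ i, y ∉ f (C i) := by simpa using hf'
  refine mem_iInter.2 fun j => ?_
  obtain ⟨k, hik, hjk⟩ := hC i j
  exact (hy k).elim (fun hk => absurd (hf hik hk) hi) (fun hk => hg hjk hk)

theorem iUnion_inter_subset_of_directed (hC : Directed (· ⊇ ·) C) (hf : Antitone f)
    (hg : Antitone g) : (⋃ i, f (C i)) ∩ ⋃ i, g (C i) ⊆ ⋃ i, (f (C i) ∩ g (C i)) := by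
  rintro y ⟨hyf, hyg⟩
  obtain ⟨i, hi⟩ := mem_iUnion.1 hyf
  obtain ⟨j, hj⟩ := mem_iUnion.1 hyg
  obtain ⟨k, hik, hjk⟩ := hC i j
  exact mem_iUnion.2 ⟨k, hf hik hi, hg hjk hj⟩

theorem Directed.superset_comp_of_monotone (hC : Directed (· ⊇ ·) C) (hf : Monotone f) :
    Directed (· ⊇ ·) fun i => f (C i) :=
  hC.mono_comp _ fun _ _ h => hf h

theorem Directed.subset_comp_of_antitone (hC : Directed (· ⊇ ·) C) (hf : Antitone f) :
    Directed (· ⊆ ·) fun i => f (C i) :=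
  hC.mono_comp _ fun _ _ h => hf h

end Directed

section Esakia

variable {W : Type} [TopologicalSpace W] {R : W → W → Prop}

theorem isClosed_setOf_flip (hR : IsClosed {q : W × W | R q.1 q.2}) :
    IsClosed {q : W × W | flip R q.1 q.2} :=
  hR.preimage continuous_swap

theorem isClosed_image_rel (hR : IsClosed {q : W × W | R q.1 q.2}) (x : W) :
    IsClosed {y | R x y} :=
  hR.preimage (Continuous.prodMk_right x)

theorem isClosed_diaOp [CompactSpace W] (hR : IsClosed {q : W × W | R q.1 q.2}) {A : Set W}
    (hA : IsClosed A) : IsClosed (diaOp R A) := by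
  have hfst : diaOp R A = Prod.fst '' ({q | R q.1 q.2} ∩ Prod.snd ⁻¹' A) := by
    ext x
    simp [diaOp]
  rw [hfst]
  exact isClosedMap_fst_of_compactSpace _ (hR.inter (hA.preimage continuous_snd))

theorem isOpen_boxOp [CompactSpace W] (hR : IsClosed {q : W × W | R q.1 q.2}) {A : Set W}
    (hA : IsOpen A) : IsOpen (boxOp R A) := by
  rw [← compl_diaOp_compl]
  exact (isClosed_diaOp hR hA.isClosed_compl).isOpen_compl

theorem isClosed_boxOp (hRo : ∀ A : Set W, IsOpen A → IsOpen (diaOp R A)) {A : Set W}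
    (hA : IsClosed A) : IsClosed (boxOp R A) := by
  rw [← compl_diaOp_compl]
  exact (hRo _ hA.isOpen_compl).isClosed_compl

/-- **Esakia's lemma**. -/
theorem iInter_diaOp_subset_diaOp_iInter [CompactSpace W] (hR : IsClosed {q : W × W | R q.1 q.2})
    {ι : Type*} [Nonempty ι] {S : ι → Set W} (hS : Directed (· ⊇ ·) S) (hSc : ∀ i, IsClosed (S i)) :
    ⋂ i, diaOp R (S i) ⊆ diaOp R (⋂ i, S i) := by
  intro x hx
  have hRS : ∀ i, IsClosed ({y | R x y} ∩ S i) := fun i =>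
    (isClosed_image_rel hR x).inter (hSc i)
  obtain ⟨v, hv⟩ := IsCompact.nonempty_iInter_of_directed_nonempty_isCompact_isClosed _
    (hS.mono_comp _ fun _ _ h => inter_subset_inter_right _ h) (mem_iInter.1 hx)
    (fun i => (hRS i).isCompact) hRS
  simp only [mem_iInter] at hv
  exact ⟨v, (hv (Classical.arbitrary ι)).1, mem_iInter.2 fun i => (hv i).2⟩

theorem boxOp_iUnion_subset_iUnion_boxOp [CompactSpace W] (hR : IsClosed {q : W × W | R q.1 q.2})
    {ι : Type*} [Nonempty ι] {U : ι → Set W} (hU : Directed (· ⊆ ·) U) (hUo : ∀ i, IsOpen (U i)) :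
    boxOp R (⋃ i, U i) ⊆ ⋃ i, boxOp R (U i) := fun x hx =>
  mem_iUnion.2 ((isClosed_image_rel hR x).isCompact.elim_directed_cover U hUo hx hU)

end Esakia

section Extension

variable {W : Type} (R : W → W → Prop) (V : Nat → Set W) (g : Nat → W)

def MFp.extension (φ : MFp) : Set W := {w | satp R V g φ w}

namespace MFp

@[simp] theorem extension_var (q : Nat) : (var q).extension R V g = V q := rfl

@[simp] theorem extension_neg (φ : MFp) : φ.neg.extension R V g = (φ.extension R V g)ᶜ := rfl

@[simp] theorem extension_or (φ ψ : MFp) :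
    (φ.or ψ).extension R V g = φ.extension R V g ∪ ψ.extension R V g := rfl

@[simp] theorem extension_and (φ ψ : MFp) :
    (φ.and ψ).extension R V g = φ.extension R V g ∩ ψ.extension R V g := rfl

@[simp] theorem extension_dia (φ : MFp) : φ.dia.extension R V g = diaOp R (φ.extension R V g) :=
  rfl

@[simp] theorem extension_box (φ : MFp) : φ.box.extension R V g = boxOp R (φ.extension R V g) :=
  rfl

@[simp] theorem extension_idia (φ : MFp) :
    φ.idia.extension R V g = diaOp (flip R) (φ.extension R V g) := rfl

@[simp] theorem extension_ibox (φ : MFp) :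
    φ.ibox.extension R V g = boxOp (flip R) (φ.extension R V g) := rfl

theorem monotone_extension_and_antitone (p : Nat) (φ : MFp) :
    (positiveInP p φ → Monotone fun A => φ.extension R (update V p A) g) ∧
      (negativeInP p φ → Antitone fun A => φ.extension R (update V p A) g) := by
  induction φ with
  | bot | top | nom k => exact ⟨fun _ _ _ _ => le_rfl, fun _ _ _ _ => le_rfl⟩
  | var q =>
    by_cases hq : q = p
    · subst hq
      simp only [extension_var, update_self]
      exact ⟨fun _ => monotone_id, fun h => absurd rfl h⟩
    · simp only [extension_var, update_of_ne hq]
      exact ⟨fun _ => monotone_const, fun _ => antitone_const⟩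
  | neg φ ih =>
    exact ⟨fun h _ _ hAB => compl_subset_compl.2 (ih.2 h hAB),
      fun h _ _ hAB => compl_subset_compl.2 (ih.1 h hAB)⟩
  | or φ ψ ihφ ihψ =>
    exact ⟨fun h => (ihφ.1 h.1).sup (ihψ.1 h.2), fun h => (ihφ.2 h.1).sup (ihψ.2 h.2)⟩
  | and φ ψ ihφ ihψ =>
    exact ⟨fun h => (ihφ.1 h.1).inf (ihψ.1 h.2), fun h => (ihφ.2 h.1).inf (ihψ.2 h.2)⟩
  | dia φ ih | idia φ ih =>
    exact ⟨fun h _ _ hAB => diaOp_mono _ (ih.1 h hAB),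
      fun h _ _ hAB => diaOp_mono _ (ih.2 h hAB)⟩
  | box φ ih | ibox φ ih =>
    exact ⟨fun h _ _ hAB => boxOp_mono _ (ih.1 h hAB),
      fun h _ _ hAB => boxOp_mono _ (ih.2 h hAB)⟩

variable {R V g} {p : Nat} {φ : MFp}

theorem monotone_extension (h : positiveInP p φ) :
    Monotone fun A => φ.extension R (update V p A) g :=
  (monotone_extension_and_antitone R V g p φ).1 h

theorem antitone_extension (h : negativeInP p φ) :
    Antitone fun A => φ.extension R (update V p A) g :=
  (monotone_extension_and_antitone R V g p φ).2 h

end MFp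

end Extension

namespace MFp

variable {W : Type} [TopologicalSpace W] [CompactSpace W] {R : W → W → Prop}
  {V : Nat → Set W} {p : Nat}

theorem isClosed_extension_and_isOpen [T1Space W] (hR : IsClosed {q : W × W | R q.1 q.2})
    (hRo : ∀ A : Set W, IsOpen A → IsOpen (diaOp R A)) (hV : ∀ q ≠ p, IsClopen (V q))
    (g : Nat → W) {A : Set W} (hA : IsClosed A) (φ : MFp) :
    (synClosed φ → positiveInP p φ → IsClosed (φ.extension R (update V p A) g)) ∧
      (synOpen φ → negativeInP p φ → IsOpen (φ.extension R (update V p A) g)) := by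
  induction φ with
  | bot => exact ⟨fun _ _ => isClosed_empty, fun _ _ => isOpen_empty⟩
  | top => exact ⟨fun _ _ => isClosed_univ, fun _ _ => isOpen_univ⟩
  | var q =>
    by_cases hq : q = p
    · subst hq
      simp only [extension_var, update_self]
      exact ⟨fun _ _ => hA, fun _ h => absurd rfl h⟩
    · simp only [extension_var, update_of_ne hq]
      exact ⟨fun _ _ => (hV q hq).isClosed, fun _ _ => (hV q hq).isOpen⟩
  | nom k => exact ⟨fun _ _ => isClosed_singleton, fun h => h.elim⟩
  | neg φ ih =>
    exact ⟨fun hc hp => (ih.2 hc hp).isClosed_compl, fun ho hn => (ih.1 ho hn).isOpen_compl⟩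
  | or φ ψ ihφ ihψ =>
    exact ⟨fun hc hp => (ihφ.1 hc.1 hp.1).union (ihψ.1 hc.2 hp.2),
      fun ho hn => (ihφ.2 ho.1 hn.1).union (ihψ.2 ho.2 hn.2)⟩
  | and φ ψ ihφ ihψ =>
    exact ⟨fun hc hp => (ihφ.1 hc.1 hp.1).inter (ihψ.1 hc.2 hp.2),
      fun ho hn => (ihφ.2 ho.1 hn.1).inter (ihψ.2 ho.2 hn.2)⟩
  | dia φ ih =>
    exact ⟨fun hc hp => isClosed_diaOp hR (ih.1 hc hp), fun ho hn => hRo _ (ih.2 ho hn)⟩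
  | box φ ih =>
    exact ⟨fun hc hp => isClosed_boxOp hRo (ih.1 hc hp),
      fun ho hn => isOpen_boxOp hR (ih.2 ho hn)⟩
  | idia φ ih =>
    exact ⟨fun hc hp => isClosed_diaOp (isClosed_setOf_flip hR) (ih.1 hc hp), nofun⟩
  | ibox φ ih =>
    exact ⟨nofun, fun ho hn => isOpen_boxOp (isClosed_setOf_flip hR) (ih.2 ho hn)⟩

theorem iInter_extension_subset_extension_iInter [T1Space W]
    (hR : IsClosed {q : W × W | R q.1 q.2}) (hRo : ∀ A : Set W, IsOpen A → IsOpen (diaOp R A))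
    (hV : ∀ q ≠ p, IsClopen (V q)) (g : Nat → W) {ι : Type*} [Nonempty ι] {C : ι → Set W}
    (hC : Directed (· ⊇ ·) C) (hCc : ∀ i, IsClosed (C i)) (φ : MFp) :
    (synClosed φ → positiveInP p φ →
        ⋂ i, φ.extension R (update V p (C i)) g ⊆ φ.extension R (update V p (⋂ i, C i)) g) ∧
      (synOpen φ → negativeInP p φ →
        φ.extension R (update V p (⋂ i, C i)) g ⊆ ⋃ i, φ.extension R (update V p (C i)) g) := by
  have hclosed (ψ : MFp) (hc : synClosed ψ) (hp : positiveInP p ψ) (i : ι) :=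
    (isClosed_extension_and_isOpen hR hRo hV g (hCc i) ψ).1 hc hp
  have hopen (ψ : MFp) (ho : synOpen ψ) (hn : negativeInP p ψ) (i : ι) :=
    (isClosed_extension_and_isOpen hR hRo hV g (hCc i) ψ).2 ho hn
  induction φ with
  | bot | nom _ => exact ⟨fun _ _ => iInter_subset _ (Classical.arbitrary ι), nofun⟩
  | top =>
    exact ⟨fun _ _ => subset_univ _,
      fun _ _ => subset_iUnion_of_subset (Classical.arbitrary ι) subset_rfl⟩
  | var q =>
    by_cases hq : q = p
    · subst hq
      simp only [extension_var, update_self]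
      exact ⟨fun _ _ => subset_rfl, fun _ h => absurd rfl h⟩
    · simp only [extension_var, update_of_ne hq]
      exact ⟨fun _ _ => iInter_subset _ (Classical.arbitrary ι),
        fun _ _ => subset_iUnion_of_subset (Classical.arbitrary ι) subset_rfl⟩
  | neg φ ih =>
    refine ⟨fun hc hp => ?_, fun ho hn => ?_⟩
    · simpa only [extension_neg, ← compl_iUnion] using compl_subset_compl.2 (ih.2 hc hp)
    · simpa only [extension_neg, ← compl_iInter] using compl_subset_compl.2 (ih.1 ho hn)
  | or φ ψ ihφ ihψ =>
    refine ⟨fun hc hp => ?_, fun ho hn => ?_⟩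
    · exact (iInter_union_subset_of_directed hC (monotone_extension hp.1)
        (monotone_extension hp.2)).trans
        (union_subset_union (ihφ.1 hc.1 hp.1) (ihψ.1 hc.2 hp.2))
    · simpa only [extension_or, iUnion_union_distrib] using
        union_subset_union (ihφ.2 ho.1 hn.1) (ihψ.2 ho.2 hn.2)
  | and φ ψ ihφ ihψ =>
    refine ⟨fun hc hp => ?_, fun ho hn => ?_⟩
    · simpa only [extension_and, iInter_inter_distrib] using
        inter_subset_inter (ihφ.1 hc.1 hp.1) (ihψ.1 hc.2 hp.2)
    · exact (inter_subset_inter (ihφ.2 ho.1 hn.1) (ihψ.2 ho.2 hn.2)).trans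
        (iUnion_inter_subset_of_directed hC (antitone_extension hn.1) (antitone_extension hn.2))
  | dia φ ih =>
    refine ⟨fun hc hp => ?_, fun ho hn => ?_⟩
    · simp only [extension_dia]
      exact (iInter_diaOp_subset_diaOp_iInter hR
        (hC.superset_comp_of_monotone (monotone_extension (φ := φ) hp))
        (hclosed φ hc hp)).trans (diaOp_mono R (ih.1 hc hp))
    · simpa only [extension_dia, diaOp_iUnion] using diaOp_mono R (ih.2 ho hn)
  | box φ ih =>
    refine ⟨fun hc hp => ?_, fun ho hn => ?_⟩
    · simpa only [extension_box, ← boxOp_iInter] using boxOp_mono R (ih.1 hc hp)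
    · simp only [extension_box]
      exact (boxOp_mono R (ih.2 ho hn)).trans (boxOp_iUnion_subset_iUnion_boxOp hR
        (hC.subset_comp_of_antitone (antitone_extension (φ := φ) hn)) (hopen φ ho hn))
  | idia φ ih =>
    refine ⟨fun hc hp => ?_, nofun⟩
    simp only [extension_idia]
    exact (iInter_diaOp_subset_diaOp_iInter (isClosed_setOf_flip hR)
      (hC.superset_comp_of_monotone (monotone_extension (φ := φ) hp))
      (hclosed φ hc hp)).trans (diaOp_mono _ (ih.1 hc hp))
  | ibox φ ih =>
    refine ⟨nofun, fun ho hn => ?_⟩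
    simp only [extension_ibox]
    exact (boxOp_mono _ (ih.2 ho hn)).trans (boxOp_iUnion_subset_iUnion_boxOp
      (isClosed_setOf_flip hR) (hC.subset_comp_of_antitone (antitone_extension (φ := φ) hn))
      (hopen φ ho hn))

end MFp

namespace GenFrame

variable {W : Type} (F : GenFrame W)

theorem isTopologicalBasis_adm : @IsTopologicalBasis W F.top F.adm := by
  have := @isTopologicalBasis_of_subbasis_of_inter W F.top F.adm rfl
    fun X hX Y hY => F.inter_mem X hX Y hY
  rwa [insert_eq_of_mem F.univ_mem] at this

theorem isClopen_of_mem_adm {X : Set W} (hX : X ∈ F.adm) : @IsClopen W F.top X := by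
  let := F.top
  exact ⟨isOpen_compl_iff.1 (isOpen_generateFrom_of_mem (F.compl_mem X hX)),
    isOpen_generateFrom_of_mem hX⟩

theorem compactSpace (h : F.cpt) : @CompactSpace W F.top :=
  @compactSpace_generateFrom_of_compl_mem W F.top F.adm rfl F.compl_mem h

theorem t1Space (h : F.differentiated) : @T1Space W F.top :=
  (@t1Space_iff_exists_open W F.top).2 fun x y hxy =>
    let ⟨X, hX, hx, hy⟩ := h x y hxy
    ⟨X, isOpen_generateFrom_of_mem hX, hx, hy⟩

theorem isClosed_setOf_R (h : F.tight) :
    letI := F.top; IsClosed {q : W × W | F.R q.1 q.2} := by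
  let := F.top
  refine isOpen_compl_iff.1 (isOpen_iff_forall_mem_open.2 fun ⟨x, y⟩ hxy => ?_)
  obtain ⟨Y, hY, hyY, hxY⟩ : ∃ Y ∈ F.adm, y ∈ Y ∧ x ∉ diaOp F.R Y := by
    simpa [h x y] using hxy
  refine ⟨(diaOp F.R Y)ᶜ ×ˢ Y, ?_, ?_, hxY, hyY⟩
  · rintro ⟨x', y'⟩ ⟨hx', hy'⟩ hR
    exact hx' ⟨y', hR, hy'⟩
  · exact (F.isClopen_of_mem_adm (F.dia_mem Y hY)).compl.isOpen.prod
      (F.isClopen_of_mem_adm hY).isOpen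

theorem isOpen_diaOp (A : Set W) (hA : IsOpen[F.top] A) : IsOpen[F.top] (diaOp F.R A) := by
  let := F.top
  refine isOpen_iff_forall_mem_open.2 fun x ⟨v, hxv, hvA⟩ => ?_
  obtain ⟨Y, hY, hvY, hYA⟩ := F.isTopologicalBasis_adm.exists_subset_of_mem_open hvA hA
  exact ⟨diaOp F.R Y, diaOp_mono F.R hYA, (F.isClopen_of_mem_adm (F.dia_mem Y hY)).isOpen,
    v, hxv, hvY⟩

end GenFrame

/-- Esakia's Lemma for syntactically closed formulae: a syntactically closed
formula positive in `p`, viewed as a set operator in `p` with admissible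
parameters and singleton nominals, commutes with intersections of downwards
directed families of nonempty closed sets. -/
theorem esakia_synClosed {W : Type} (F : GenFrame W) (hF : F.descriptive)
    (φ : MFp) (p : Nat) (hc : synClosed φ) (hpos : positiveInP p φ)
    (V : Nat → Set W) (hV : ∀ q, q ≠ p → V q ∈ F.adm) (g : Nat → W)
    {I : Type} [Nonempty I] (C : I → Set W)
    (hclosed : ∀ i, @IsClosed W F.top (C i))
    (hne : ∀ i, (C i).Nonempty)
    (hdir : ∀ i j, ∃ k, C k ⊆ C i ∩ C j) :
    {w | satp F.R (Function.update V p (⋂ i, C i)) g φ w} =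
      ⋂ i, {w | satp F.R (Function.update V p (C i)) g φ w} := by
  obtain ⟨hdiff, htight, hcpt⟩ := hF
  let := F.top
  have := F.compactSpace hcpt
  have := F.t1Space hdiff
  have hVclopen : ∀ q ≠ p, IsClopen (V q) := fun q hq => F.isClopen_of_mem_adm (hV q hq)
  have hCdir : Directed (· ⊇ ·) C := fun i j =>
    (hdir i j).imp fun _ hk => ⟨hk.trans inter_subset_left, hk.trans inter_subset_right⟩
  refine Subset.antisymm
    (subset_iInter fun i => MFp.monotone_extension hpos (iInter_subset C i)) ?_
  exact (MFp.iInter_extension_subset_extension_iInter (F.isClosed_setOf_R htight)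
    F.isOpen_diaOp hVclopen g hCdir hclosed φ).1 hc hpos
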